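/- Let A ⊆ ℕ and ℓ ∈ ℕ be such that A ∪ (A − ℓ) ⊇ ℕ, where A − ℓ = {n ∈ ℕ : n + ℓ ∈ A}. Then there exists d ∈ ℕ such that dℕ ⊆ A − A, where A − A = {a − b : a, b ∈ A, a > b}. -/
import Mathlib


/-- The set of positive pairwise differences of `A ⊆ ℕ`. -/
def diffSet (A : Set ℕ) : Set ℕ := {n : ℕ | ∃ a ∈ A, ∃ b ∈ A, b < a ∧ a = b + n}

theorem two_syndetic_differences (A : Set ℕ) (ℓ : ℕ)
    (hcov : ∀ n : ℕ, 0 < n → n ∈ A ∨ n + ℓ ∈ A) :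
    ∃ d : ℕ, 0 < d ∧ ∀ n : ℕ, 0 < n → d * n ∈ diffSet A := by
  rcases Nat.eq_zero_or_pos ℓ with hl | hl
  · subst hl
    refine ⟨1, one_pos, fun n hn => ?_⟩
    have h1 : (1:ℕ) ∈ A := by simpa using hcov 1 one_pos
    have h2 : 1 + n ∈ A := by simpa using hcov (1+n) (by omega)
    exact ⟨1 + n, h2, 1, h1, by omega, by omega⟩
  by_cases h : ∀ m, 0 < m → ℓ * m ∈ diffSet A
  · exact ⟨ℓ, hl, h⟩
  push_neg at h
  obtain ⟨m, hm, hmd⟩ := h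
  obtain ⟨n0, hn0A, hn0⟩ : ∃ n0, n0 ∈ A ∧ 0 < n0 := by
    rcases hcov 1 one_pos with h | h
    · exact ⟨1, h, one_pos⟩
    · exact ⟨1+ℓ, h, by omega⟩
  have hlm : 0 < ℓ * m := Nat.mul_pos hl hm
  have key : ∀ k, n0 + ℓ*(m+1)*k ∈ A := by
    intro k
    induction k with
    | zero => simpa using hn0A
    | succ k ih =>
      set x := n0 + ℓ*(m+1)*k with hx
      have hnot : x + ℓ*m ∉ A := by
        intro hmem
        exact hmd ⟨x + ℓ*m, hmem, x, ih, by omega, rfl⟩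
      have hc := hcov (x + ℓ*m) (by omega)
      have hA : x + ℓ*m + ℓ ∈ A := by tauto
      have : x + ℓ*m + ℓ = n0 + ℓ*(m+1)*(k+1) := by rw [hx]; ring
      rwa [this] at hA
  refine ⟨ℓ*(m+1), Nat.mul_pos hl (by omega), fun n hn => ?_⟩
  have hpos : 0 < ℓ*(m+1)*n := Nat.mul_pos (Nat.mul_pos hl (by omega)) hn
  exact ⟨n0 + ℓ*(m+1)*n, key n, n0, hn0A, by omega, by ring⟩
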